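/- Let A be a saturated class of morphisms of simplicial sets satisfying 3-for-2 for monomorphisms. If A contains all spine inclusions sp_n : Sp_n → Δ[n] for n ≥ 2 and contains the left cone inclusion c_2 : C_2 → Δ[2], then A contains all left cone inclusions c_n : C_n → Δ[n] for n ≥ 2. -/

import Mathlib

open CategoryTheory CategoryTheory.GrothendieckTopology CategoryTheory.Limits Simplicial SSet Opposite

noncomputable section

namespace BousfieldPaper

/-! ## Basic lifting-property classes of simplicial sets -/

/-- A Kan fibration: a map with the right lifting property against all horn inclusions. -/
def KanFibration {S T : SSet.{0}} (p : S ⟶ T) : Prop :=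
  ∀ (n : ℕ) (i : Fin (n + 2)), HasLiftingProperty (Λ[n + 1, i].ι) p

/-- An acyclic (trivial) Kan fibration: a map with the right lifting property against
all boundary inclusions. -/
def TrivialKanFibration {S T : SSet.{0}} (p : S ⟶ T) : Prop :=
  ∀ n : ℕ, HasLiftingProperty (∂Δ[n].ι) p

/-- The class of maps with the right lifting property against every map in `T`. -/
def rlpOf {C : Type*} [Category C] (T : MorphismProperty C) : MorphismProperty C :=
  fun _ _ p => ∀ ⦃A B : C⦄ (i : A ⟶ B), T i → HasLiftingProperty i p

/-- The class of maps with the left lifting property against every map in `T`. -/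
def llpOf {C : Type*} [Category C] (T : MorphismProperty C) : MorphismProperty C :=
  fun _ _ i => ∀ ⦃S T' : C⦄ (p : S ⟶ T'), T p → HasLiftingProperty i p

/-- The saturation `llp(rlp(S))` of a class of maps. -/
def saturationOf {C : Type*} [Category C] (S : MorphismProperty C) : MorphismProperty C :=
  llpOf (rlpOf S)

/-- The class of all horn inclusions (up to isomorphism of arrows). -/
def HornClass : MorphismProperty SSet.{0} := fun _ _ f =>
  ∃ (n : ℕ) (i : Fin (n + 2)), Nonempty (Arrow.mk f ≅ Arrow.mk (Λ[n + 1, i].ι))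

/-- The class of left horn inclusions `Λ[n,0] → Δ[n]`, `n ≥ 2` (up to isomorphism of arrows). -/
def LeftHornClass : MorphismProperty SSet.{0} := fun _ _ f =>
  ∃ n : ℕ, 2 ≤ n ∧ Nonempty (Arrow.mk f ≅ Arrow.mk (Λ[n, 0].ι))

/-- Anodyne maps: the saturation of the class of horn inclusions. -/
def Anodyne : MorphismProperty SSet.{0} := saturationOf HornClass

/-- A weak homotopy equivalence of simplicial sets (in the Kan--Quillen sense):
a map admitting a factorization as an anodyne map followed by an acyclic Kan fibration. -/
def WeakHomotopyEquivalence {S T : SSet.{0}} (f : S ⟶ T) : Prop :=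
  ∃ (Z : SSet.{0}) (i : S ⟶ Z) (p : Z ⟶ T),
    Anodyne i ∧ TrivialKanFibration p ∧ i ≫ p = f

/-! ## Saturated classes -/

/-- `f` is a retract of `g` in the arrow category. -/
def IsRetractOf {C : Type*} [Category C] {X Y X' Y' : C} (f : X ⟶ Y) (g : X' ⟶ Y') : Prop :=
  ∃ (i : Arrow.mk f ⟶ Arrow.mk g) (r : Arrow.mk g ⟶ Arrow.mk f), i ≫ r = 𝟙 _

/-- The inclusion functor of the subposet `{x | x < j}` of `J`. -/
def iioFunctor {J : Type} [Preorder J] (j : J) : Set.Iio j ⥤ J :=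
  Monotone.functor (f := fun x => (x : J)) (fun _ _ h => h)

/-- The cocone on the restriction of `F : J ⥤ C` to `{x | x < j}` with apex `F.obj j`. -/
def coconeBelow {J : Type} [Preorder J] {C : Type*} [Category C]
    (F : J ⥤ C) (j : J) : Cocone (iioFunctor j ⋙ F) where
  pt := F.obj j
  ι :=
    { app := fun x => F.map (homOfLE (le_of_lt x.2))
      naturality := fun x y g => by
        dsimp [iioFunctor, Monotone.functor]
        rw [← F.map_comp, Category.comp_id]
        congr 1 }

/-- A class of morphisms of simplicial sets is *saturated* (weakly saturated) if it is closed
under pushouts (cobase change), retracts and transfinite compositions. -/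
structure IsSaturated (A : MorphismProperty SSet.{0}) : Prop where
  pushout : ∀ ⦃X Y X' Y' : SSet.{0}⦄ (f : X ⟶ Y) (u : X ⟶ X') (v : Y ⟶ Y') (f' : X' ⟶ Y'),
    IsPushout f u v f' → A f → A f'
  retract : ∀ ⦃X Y X' Y' : SSet.{0}⦄ (f : X ⟶ Y) (g : X' ⟶ Y'),
    IsRetractOf f g → A g → A f
  transfinite : ∀ (J : Type) (_ : LinearOrder J) (_ : SuccOrder J) (_ : OrderBot J)
    (_ : WellFoundedLT J) (F : J ⥤ SSet.{0}) (c : Cocone F) (_ : IsColimit c),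
    (∀ j : J, ¬IsMax j → A (F.map (homOfLE (Order.le_succ j)))) →
    (∀ j : J, Order.IsSuccLimit j → Nonempty (IsColimit (coconeBelow F j))) →
    A (c.ι.app ⊥)

/-- Right cancellation property for monomorphisms. -/
def RightCancel (A : MorphismProperty SSet.{0}) : Prop :=
  ∀ ⦃X Y Z : SSet.{0}⦄ (u : X ⟶ Y) (v : Y ⟶ Z),
    Mono u → Mono v → A (u ≫ v) → A u → A v

/-- Left cancellation property for monomorphisms. -/
def LeftCancel (A : MorphismProperty SSet.{0}) : Prop :=
  ∀ ⦃X Y Z : SSet.{0}⦄ (u : X ⟶ Y) (v : Y ⟶ Z),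
    Mono u → Mono v → A (u ≫ v) → A v → A u

/-- 3-for-2 for monomorphisms: both left and right cancellation. -/
def ThreeForTwo (A : MorphismProperty SSet.{0}) : Prop :=
  RightCancel A ∧ LeftCancel A

/-! ## The left cone, the spine, and related subcomplexes of the standard simplex -/

/-- The left cone `C n ⊆ Δ[n]`: the union of the images of the initial edges `0 → i`. -/
def coneSub (n : ℕ) : Subfunctor Δ[n] where
  obj m := {α | ∃ i : ℕ, 1 ≤ i ∧ i ≤ n ∧
    ∀ j, (stdSimplex.asOrderHom α j : ℕ) = 0 ∨ (stdSimplex.asOrderHom α j : ℕ) = i}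
  map := by
    rintro m m' g α ⟨i, hi1, hin, h⟩
    exact ⟨i, hi1, hin, fun j => h _⟩

/-- The spine `Sp n ⊆ Δ[n]`: the union of the images of the edges `i → i+1`. -/
def spineSub (n : ℕ) : Subfunctor Δ[n] where
  obj m := {α | ∃ i : ℕ, i + 1 ≤ n ∧
    ∀ j, (stdSimplex.asOrderHom α j : ℕ) = i ∨ (stdSimplex.asOrderHom α j : ℕ) = i + 1}
  map := by
    rintro m m' g α ⟨i, hi, h⟩
    exact ⟨i, hi, fun j => h _⟩

/-- The union `(SpC) n ⊆ Δ[n]` of the images of the `2`-simplices `{0, i, i+1}`, `0 < i < n`. -/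
def spcSub (n : ℕ) : Subfunctor Δ[n] where
  obj m := {α | ∃ i : ℕ, 0 < i ∧ i + 1 ≤ n ∧
    ∀ j, (stdSimplex.asOrderHom α j : ℕ) = 0 ∨ (stdSimplex.asOrderHom α j : ℕ) = i ∨ (stdSimplex.asOrderHom α j : ℕ) = i + 1}
  map := by
    rintro m m' g α ⟨i, h₀, h₁, h⟩
    exact ⟨i, h₀, h₁, fun j => h _⟩

/-- The canonical inclusion `k n : C n → Λ[n, 0]` of the left cone into the left horn. -/
def coneToHorn (n : ℕ) (hn : 2 ≤ n) : ((coneSub n).toFunctor : SSet.{0}) ⟶ Λ[n, 0] where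
  app m := TypeCat.ofHom fun α => by
    refine ⟨α.1, ?_⟩
    obtain ⟨i, hi1, hin, h⟩ := α.2
    intro hu
    rw [Set.eq_univ_iff_forall] at hu
    obtain ⟨kv, hkv0, hkvi, hkvlt⟩ : ∃ kv : ℕ, kv ≠ 0 ∧ kv ≠ i ∧ kv < n + 1 := by
      rcases eq_or_ne i 1 with hc | hc
      · exact ⟨2, by omega, by omega, by omega⟩
      · exact ⟨1, by omega, by omega, by omega⟩
    rcases hu ⟨kv, hkvlt⟩ with hr | h0
    · obtain ⟨j, hj⟩ := hr
      have hval := congrArg Fin.val hj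
      rcases h j with h' | h' <;> simp_all
    · have := congrArg Fin.val (Set.mem_singleton_iff.1 h0)
      simp_all

/-- The nerve `IΔ^n` of the free groupoid (codiscrete groupoid) on `{0, …, n}`:
its `m`-simplices are all (not necessarily monotone) functions `Fin (m+1) → Fin (n+1)`. -/
def IDelta (n : ℕ) : SSet.{0} where
  obj m := Fin (m.unop.len + 1) → Fin (n + 1)
  map f := TypeCat.ofHom fun α => α ∘ f.unop.toOrderHom

/-- The canonical inclusion `Δ[n] → IΔ^n`. -/
def iDeltaIncl (n : ℕ) : (Δ[n] : SSet.{0}) ⟶ IDelta n where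
  app m := TypeCat.ofHom fun α => ⇑(stdSimplex.asOrderHom α)

/-- The vertex `k : Δ[0] → IΔ^n`. -/
def iDeltaVertex (n : ℕ) (k : Fin (n + 1)) : (Δ[0] : SSet.{0}) ⟶ IDelta n where
  app m := TypeCat.ofHom fun _ => fun _ => k


/-! ## Bisimplicial sets, the box product and the slash construction -/

/-- Bisimplicial sets: presheaves of sets on `Δ × Δ`. -/
abbrev BSSet : Type 1 := (SimplexCategory × SimplexCategory)ᵒᵖ ⥤ Type

/-- The box product `A □ B` of two simplicial sets: `(A □ B)_{n,m} = A_n × B_m`. -/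
def box (A B : SSet.{0}) : BSSet where
  obj nm := A.obj (op nm.unop.1) × B.obj (op nm.unop.2)
  map f := TypeCat.ofHom fun p => ⟨A.map f.unop.1.op p.1, B.map f.unop.2.op p.2⟩

/-- The box product, functorially in its second variable. -/
def boxFunctor (A : SSet.{0}) : SSet.{0} ⥤ BSSet where
  obj B := box A B
  map g :=
    { app := fun nm => TypeCat.ofHom fun p => ⟨p.1, g.app _ p.2⟩
      naturality := fun nm nm' f => by
        ext p
        exact congrArg (Prod.mk (A.map f.unop.1.op p.1)) (NatTrans.naturality_apply g f.unop.2.op p.2) }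

/-- The box product is natural in its first variable. -/
def boxHomLeft {A A' : SSet.{0}} (f : A ⟶ A') (B : SSet.{0}) :
    (boxFunctor A).obj B ⟶ (boxFunctor A').obj B where
  app nm := TypeCat.ofHom fun p => ⟨f.app _ p.1, p.2⟩
  naturality nm nm' g := by
    ext p
    exact congrArg (fun a => Prod.mk a (B.map g.unop.2.op p.2)) (NatTrans.naturality_apply f g.unop.1.op p.1)

lemma boxHomLeft_natural {A A' : SSet.{0}} (f : A ⟶ A') {B B' : SSet.{0}} (g : B ⟶ B') :
    (boxFunctor A).map g ≫ boxHomLeft f B' = boxHomLeft f B ≫ (boxFunctor A').map g := rfl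

/-- The simplicial set `A \ X` with `m`-simplices the bisimplicial maps `A □ Δ[m] → X`. -/
def slash (A : SSet.{0}) (X : BSSet) : SSet.{0} :=
  SSet.stdSimplex.op ⋙ ((boxFunctor A).op ⋙ yoneda.obj X)

/-- Functoriality (contravariance) of `A \ X` in `A`. -/
def slashMap {A A' : SSet.{0}} (f : A ⟶ A') (X : BSSet) : slash A' X ⟶ slash A X :=
  Functor.whiskerLeft SSet.stdSimplex.op
    (Functor.whiskerRight (NatTrans.op
      { app := fun B => boxHomLeft f B
        naturality := fun _ _ g => (boxHomLeft_natural f g).symm }) (yoneda.obj X))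

lemma slashMap_id (A : SSet.{0}) (X : BSSet) : slashMap (𝟙 A) X = 𝟙 (slash A X) := rfl

lemma slashMap_comp {A A' A'' : SSet.{0}} (f : A ⟶ A') (g : A' ⟶ A'') (X : BSSet) :
    slashMap (f ≫ g) X = slashMap g X ≫ slashMap f X := rfl


/-! ## Columns, Reedy fibrancy, Segal and Bousfield maps -/

/-- The `n`-th column `X_n := Δ[n] \ X` of a bisimplicial set. -/
def col (n : ℕ) (X : BSSet) : SSet.{0} := slash Δ[n] X

/-- The face map `d_i : X_{n+1} → X_n` between columns. -/
def colδ {n : ℕ} (i : Fin (n + 2)) (X : BSSet) : col (n + 1) X ⟶ col n X :=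
  slashMap (SSet.stdSimplex.map (SimplexCategory.δ i)) X

/-- The degeneracy map `s_i : X_n → X_{n+1}` between columns. -/
def colσ {n : ℕ} (i : Fin (n + 1)) (X : BSSet) : col n X ⟶ col (n + 1) X :=
  slashMap (SSet.stdSimplex.map (SimplexCategory.σ i)) X

/-- A bisimplicial set is `v`-fibrant (Reedy fibrant) if `f \ X` is a Kan fibration for
every monomorphism `f` of simplicial sets. -/
def VFibrant (X : BSSet) : Prop :=
  ∀ ⦃A B : SSet.{0}⦄ (f : A ⟶ B), Mono f → KanFibration (slashMap f X)

/-- The `n`-th Bousfield map `β_n = c_n \ X : X_n → C_n \ X`. -/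
def bousfieldMap (n : ℕ) (X : BSSet) : col n X ⟶ slash (coneSub n).toFunctor X :=
  slashMap (coneSub n).ι X

/-- The `n`-th Segal map `ξ_n = sp_n \ X : X_n → Sp_n \ X`. -/
def segalMap (n : ℕ) (X : BSSet) : col n X ⟶ slash (spineSub n).toFunctor X :=
  slashMap (spineSub n).ι X

/-- A Bousfield-Segal space: a `v`-fibrant bisimplicial set whose Bousfield maps `β_n`,
`n ≥ 2`, are weak homotopy equivalences. -/
def IsBSegal (X : BSSet) : Prop :=
  VFibrant X ∧ ∀ n : ℕ, 2 ≤ n → WeakHomotopyEquivalence (bousfieldMap n X)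

/-- A Segal space: a `v`-fibrant bisimplicial set whose Segal maps `ξ_n`,
`n ≥ 2`, are weak homotopy equivalences. -/
def IsSegal (X : BSSet) : Prop :=
  VFibrant X ∧ ∀ n : ℕ, 2 ≤ n → WeakHomotopyEquivalence (segalMap n X)

/-- The map `IΔ^1 \ X → X_0` induced by the vertex `{0} : Δ[0] → IΔ^1`. -/
def completenessMap (X : BSSet) : slash (IDelta 1) X ⟶ col 0 X :=
  slashMap (iDeltaVertex 1 0) X

/-- A complete Bousfield-Segal space. -/
def IsCompleteBSegal (X : BSSet) : Prop :=
  IsBSegal X ∧ WeakHomotopyEquivalence (completenessMap X)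

/-- A bisimplicial set is homotopically constant if every map of the simplex category
induces a weak homotopy equivalence between the corresponding columns. -/
def HomotopicallyConstant (X : BSSet) : Prop :=
  ∀ ⦃a b : SimplexCategory⦄ (f : a ⟶ b),
    WeakHomotopyEquivalence (slashMap (SSet.stdSimplex.map f) X)

/-! ## Vertices, edges and the fraction operation -/

/-- The vertices of a simplicial set. -/
def vert (S : SSet.{0}) : Type := S.obj (op (SimplexCategory.mk 0))

/-- Two vertices of a simplicial set lie in the same connected component, i.e. they have
equal classes in `π₀`. -/
def hSim (S : SSet.{0}) (a b : vert S) : Prop :=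
  Relation.EqvGen (fun v w : vert S => ∃ e : S.obj (op (SimplexCategory.mk 1)),
    SimplicialObject.δ S 1 e = v ∧ SimplicialObject.δ S 0 e = w) a b

/-- The edge `0 → i` of the left cone `C n`. -/
def coneEdge (n : ℕ) (i : Fin (n + 1)) (hi : i ≠ 0) :
    (Δ[1] : SSet.{0}) ⟶ (coneSub n).toFunctor where
  app m := TypeCat.ofHom fun β => by
    refine ⟨(SSet.stdSimplex.map (SimplexCategory.mkOfLe 0 i (Fin.zero_le i))).app m β, ?_⟩
    have hne : (i : ℕ) ≠ 0 := fun h => hi (by apply Fin.ext; simpa using h)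
    refine ⟨(i : ℕ), by omega, i.is_le, fun j => ?_⟩
    have key : ∀ k : Fin 2,
        (((SimplexCategory.mkOfLe (0 : Fin (n + 1)) i (Fin.zero_le i)).toOrderHom k : Fin (n+1)) : ℕ) = 0 ∨
        (((SimplexCategory.mkOfLe (0 : Fin (n + 1)) i (Fin.zero_le i)).toOrderHom k : Fin (n+1)) : ℕ) = i := by
      intro k
      match k with
      | 0 => left; rfl
      | 1 => right; rfl
    exact key _
  naturality m m' g := by
    refine ConcreteCategory.hom_ext _ _ fun β => ?_
    apply Subtype.ext
    exact NatTrans.naturality_apply ((SSet.stdSimplex.map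
      (SimplexCategory.mkOfLe 0 i (Fin.zero_le i)))) g β

variable (X : BSSet)

/-- Vertex component of the restriction along the edge `0 → 2` of `C₂` (the "numerator"). -/
def eF (w : vert (slash (coneSub 2).toFunctor X)) : vert (col 1 X) :=
  (slashMap (coneEdge 2 2 (by decide)) X).app _ w

/-- Vertex component of the restriction along the edge `0 → 1` of `C₂` (the "denominator"). -/
def eG (w : vert (slash (coneSub 2).toFunctor X)) : vert (col 1 X) :=
  (slashMap (coneEdge 2 1 (by decide)) X).app _ w

/-- Vertex component of the face map `d_i : X_1 → X_0`. -/
def dV (i : Fin 2) (f : vert (col 1 X)) : vert (col 0 X) := (colδ i X).app _ f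

/-- Vertex component of the degeneracy `s_0 : X_0 → X_1`; `oneV X x` is `1_x`. -/
def oneV (x : vert (col 0 X)) : vert (col 1 X) := (colσ 0 X).app _ x

/-- The fraction operation determined by a section `μ₂` of the Bousfield map `β₂`:
`f/g := d₀ (μ₂ (f, g))`. -/
def fracV (μ₂ : slash (coneSub 2).toFunctor X ⟶ col 2 X)
    (w : vert (slash (coneSub 2).toFunctor X)) : vert (col 1 X) :=
  (colδ 0 X).app _ (μ₂.app _ w)

lemma dV_oneV (x : vert (col 0 X)) (i : Fin 2) : dV X i (oneV X x) = x := by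
  have h : colσ (0 : Fin 1) X ≫ colδ i X = 𝟙 (col 0 X) := by
    rw [colδ, colσ]
    refine (slashMap_comp _ _ X).symm.trans ?_
    refine (congrArg (fun t => slashMap t X) (SSet.stdSimplex.map_comp _ _).symm).trans ?_
    have : SimplexCategory.δ i ≫ SimplexCategory.σ (0 : Fin 1) = 𝟙 (SimplexCategory.mk 0) := by
      fin_cases i
      · exact SimplexCategory.δ_comp_σ_self
      · exact SimplexCategory.δ_comp_σ_succ
    rw [this]
    exact (congrArg (fun t => slashMap t X) (SSet.stdSimplex.map_id _)).trans (slashMap_id _ X)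
  exact ConcreteCategory.congr_hom (congrArg (fun (t : col 0 X ⟶ col 0 X) => t.app (op (SimplexCategory.mk 0)))
    h) x

/-- The identity morphism `1_x` as an element of the hom-space `X₁(x,x)`. -/
def idHom (x : vert (col 0 X)) :
    {f : vert (col 1 X) // dV X 1 f = x ∧ dV X 0 f = x} :=
  ⟨oneV X x, dV_oneV X x 1, dV_oneV X x 0⟩


/-! ## Cellularity, pushouts of coproducts, finite compositions of pushouts -/

/-- `f` is a pushout (cobase change) of `g`. -/
def IsPushoutOf {C : Type*} [Category C] {A B X Y : C} (g : A ⟶ B) (f : X ⟶ Y) : Prop :=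
  ∃ (u : A ⟶ X) (v : B ⟶ Y), IsPushout g u v f

/-- `f` is a pushout of a coproduct of maps belonging to the class `S`. -/
def IsPushoutOfCoproductOf (S : MorphismProperty SSet.{0}) {P Q : SSet.{0}} (f : P ⟶ Q) : Prop :=
  ∃ (ι : Type) (A B : ι → SSet.{0}) (g : ∀ i, A i ⟶ B i),
    (∀ i, S (g i)) ∧
      IsPushoutOf (Limits.Sigma.desc (fun i => g i ≫ Limits.Sigma.ι B i) : (∐ A) ⟶ (∐ B)) f

/-- `f` is cellular with respect to the class `S`: it is a (transfinite, here `ℕ`-indexed)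
composition of pushouts of coproducts of maps of `S`. -/
def IsCellularIn (S : MorphismProperty SSet.{0}) {X Y : SSet.{0}} (f : X ⟶ Y) : Prop :=
  ∃ (F : ℕ ⥤ SSet.{0}) (c : Cocone F) (_ : IsColimit c) (e₀ : F.obj 0 ≅ X) (e : c.pt ≅ Y),
    (∀ m : ℕ, IsPushoutOfCoproductOf S (F.map (homOfLE (Nat.le_succ m)))) ∧
      f = e₀.inv ≫ c.ι.app 0 ≫ e.hom

/-- `f` is a finite composition of pushouts of `g`. -/
inductive FinCompPushoutsOf {A B : SSet.{0}} (g : A ⟶ B) : ∀ {X Y : SSet.{0}}, (X ⟶ Y) → Prop where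
  | of {X Y : SSet.{0}} (f : X ⟶ Y) : IsPushoutOf g f → FinCompPushoutsOf g f
  /-- Composition with a further pushout of `g`. -/
  | comp {X Y Z : SSet.{0}} (f₁ : X ⟶ Y) (f₂ : Y ⟶ Z) :
      IsPushoutOf g f₁ → FinCompPushoutsOf g f₂ → FinCompPushoutsOf g (f₁ ≫ f₂)

/-! ## Lattice operations on subpresheaves -/

variable {C : Type*} [Category C]

/-- Intersection of two subpresheaves. -/
def subInf {F : Cᵒᵖ ⥤ Type} (G G' : Subfunctor F) : Subfunctor F where
  obj U := G.obj U ∩ G'.obj U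
  map i := fun _ hx => ⟨G.map i hx.1, G'.map i hx.2⟩

/-- Union of two subpresheaves. -/
def subSup {F : Cᵒᵖ ⥤ Type} (G G' : Subfunctor F) : Subfunctor F where
  obj U := G.obj U ∪ G'.obj U
  map i := by
    rintro x (hx | hx)
    · exact Or.inl (G.map i hx)
    · exact Or.inr (G'.map i hx)

lemma subInf_le_left {F : Cᵒᵖ ⥤ Type} (G G' : Subfunctor F) : subInf G G' ≤ G :=
  fun _ => Set.inter_subset_left

lemma le_subSup_left {F : Cᵒᵖ ⥤ Type} (G G' : Subfunctor F) : G ≤ subSup G G' :=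
  fun _ => Set.subset_union_left

/-! ## The coface `d¹` and the left cone -/

/-- The coface map `d¹ : Δ[n] → Δ[n+1]`. -/
def d1Map (n : ℕ) : (Δ[n] : SSet.{0}) ⟶ Δ[n + 1] :=
  SSet.stdSimplex.map (SimplexCategory.δ 1)

/-- The restriction of `d¹` to a map `C n → C (n+1) ∩ d¹[Δ[n]]`. -/
def coneToInter (n : ℕ) : ((coneSub n).toFunctor : SSet.{0}) ⟶
    (subInf (coneSub (n + 1)) (Subfunctor.range (d1Map n))).toFunctor where
  app m := TypeCat.ofHom fun α => by
    refine ⟨(d1Map n).app m α.1, ?_, ⟨α.1, rfl⟩⟩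
    obtain ⟨i, hi1, hin, h⟩ := α.2
    refine ⟨i + 1, by omega, by omega, fun j => ?_⟩
    have key : stdSimplex.asOrderHom ((d1Map n).app m α.1) j
        = (1 : Fin (n + 2)).succAbove (stdSimplex.asOrderHom α.1 j) := rfl
    rcases h j with h' | h'
    · left
      have h0 : stdSimplex.asOrderHom α.1 j = 0 := by
        apply Fin.ext; exact h'
      rw [key, h0, Fin.succAbove_of_castSucc_lt]
      · simp
      · simp
    · right
      rw [key, Fin.succAbove_of_le_castSucc]
      · simp [Fin.val_succ, h']
      · rw [Fin.le_def]
        simpa using by omega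
  naturality m m' g := by
    refine ConcreteCategory.hom_ext _ _ fun α => ?_
    apply Subtype.ext
    exact NatTrans.naturality_apply (d1Map n) g α.1

/-! ## Horizontally constant bisimplicial sets and closure properties -/

/-- `p₁* A`: the horizontally constant bisimplicial set with `(p₁* A)_{n,m} = A_n`. -/
def pHorizontal (A : SSet.{0}) : BSSet where
  obj nm := A.obj (op nm.unop.1)
  map f := A.map f.unop.1.op

/-- A class of maps of bisimplicial sets is stable under pullbacks. -/
def StableUnderPullbacksB (F : MorphismProperty BSSet) : Prop :=
  ∀ ⦃W X Y Z : BSSet⦄ (p' : W ⟶ X) (f' : W ⟶ Z) (f : X ⟶ Y) (p : Z ⟶ Y),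
    IsPullback p' f' f p → F f → F f'

/-- A class of maps of bisimplicial sets is stable under retracts. -/
def StableUnderRetractsB (F : MorphismProperty BSSet) : Prop :=
  ∀ ⦃X Y X' Y' : BSSet⦄ (f : X ⟶ Y) (g : X' ⟶ Y'), IsRetractOf f g → F g → F f

/-- A class of maps of bisimplicial sets is closed under sequential (inverse) limits:
limits of towers of arrows belonging to the class again belong to the class. -/
def ClosedUnderSequentialLimitsB (F : MorphismProperty BSSet) : Prop :=
  ∀ (G : ℕᵒᵖ ⥤ Arrow BSSet), (∀ n : ℕᵒᵖ, F (G.obj n).hom) →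
    ∀ (c : Cone G), IsLimit c → F c.pt.hom
/-!
Let `SpC_n ⊆ Δ[n]` be the union of the triangles `{0, i, i + 1}`, `0 < i < n`. Starting from
`C_n` (resp. `Sp_n`) and attaching these triangles one at a time in increasing order of `i`,
the new triangle meets what is already there exactly in its edges `{0, i}`, `{0, i + 1}`
(resp. `{0, i}`, `{i, i + 1}`), so each step is a pushout of `c₂` (resp. `sp₂`). Hence both
`C_n ⊆ SpC_n` and `Sp_n ⊆ SpC_n` lie in `A`. Right cancellation along
`Sp_n ⊆ SpC_n ⊆ Δ[n]` puts `SpC_n ⊆ Δ[n]` in `A`, and composing it with `C_n ⊆ SpC_n`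
gives `c_n`.
-/

end BousfieldPaper

universe u

namespace SSet

namespace stdSimplex

instance mono_map {m n : SimplexCategory} (f : m ⟶ n) [Mono f] :
    Mono (SSet.stdSimplex.map f) := by
  rw [NatTrans.mono_iff_mono_app]
  intro k
  rw [mono_iff_injective]
  intro x y h
  exact objEquiv.injective ((cancel_mono f).1 (objEquiv.symm.injective h))

lemma ext_asOrderHom {n : ℕ} {m : SimplexCategoryᵒᵖ} {α β : (Δ[n] : SSet.{u}).obj m}
    (h : ∀ j, (asOrderHom α j : ℕ) = asOrderHom β j) : α = β :=
  objEquiv.injective (SimplexCategory.Hom.ext _ _ (OrderHom.ext _ _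
    (funext fun j => Fin.ext (h j))))

end stdSimplex

namespace Subcomplex

lemma isPushout_preimage_sup_range {X Y : SSet.{u}} (B : X.Subcomplex) (f : Y ⟶ X) [Mono f] :
    IsPushout (B.preimage f).ι (B.fromPreimage f) (lift f le_sup_right)
      (homOfLE (le_sup_left : B ≤ B ⊔ range f)) := by
  have sq : BicartSq (range ((B.preimage f).ι ≫ f)) B (range f) (B ⊔ range f) :=
    { sup_eq := rfl
      inf_eq := by
        ext _ x
        constructor
        · rintro ⟨hx, y, rfl⟩
          exact ⟨⟨y, hx⟩, rfl⟩
        · rintro ⟨y, rfl⟩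
          exact ⟨y.2, y.1, rfl⟩ }
  exact (sq.isPushout.of_iso' (asIso (toRange ((B.preimage f).ι ≫ f))) (Iso.refl _)
    (asIso (toRange f)) (Iso.refl _) rfl rfl rfl rfl).flip

end Subcomplex

end SSet

namespace BousfieldPaper

def triangleSub (n k : ℕ) : (Δ[n] : SSet.{u}).Subcomplex where
  obj _ := {α | ∀ j, (stdSimplex.asOrderHom α j : ℕ) = 0 ∨
    (stdSimplex.asOrderHom α j : ℕ) = k ∨ (stdSimplex.asOrderHom α j : ℕ) = k + 1}
  map _ _ h := fun _ => h _

def triangleUnion (n : ℕ) (B : (Δ[n] : SSet.{u}).Subcomplex) (k : ℕ) :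
    (Δ[n] : SSet.{u}).Subcomplex :=
  match k with
  | 0 => B
  | k + 1 => triangleUnion n B k ⊔ triangleSub n (k + 1)

lemma mem_triangleUnion_iff {n : ℕ} (B : (Δ[n] : SSet.{u}).Subcomplex) (k : ℕ)
    {m : SimplexCategoryᵒᵖ} (α : (Δ[n] : SSet.{u}).obj m) :
    α ∈ (triangleUnion n B k).obj m ↔
      α ∈ B.obj m ∨ ∃ i, 1 ≤ i ∧ i ≤ k ∧ α ∈ (triangleSub n i).obj m := by
  induction k with
  | zero => simp [triangleUnion]
  | succ k ih =>
    change α ∈ (triangleUnion n B k).obj m ∨ α ∈ (triangleSub n (k + 1)).obj m ↔ _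
    rw [ih]
    constructor
    · rintro ((hB | ⟨i, hi₁, hik, hi⟩) | h)
      · exact Or.inl hB
      · exact Or.inr ⟨i, hi₁, by omega, hi⟩
      · exact Or.inr ⟨k + 1, by omega, le_rfl, h⟩
    · rintro (hB | ⟨i, hi₁, hik, hi⟩)
      · exact Or.inl (Or.inl hB)
      · rcases Nat.lt_or_ge i (k + 1) with hlt | hge
        · exact Or.inl (Or.inr ⟨i, hi₁, by omega, hi⟩)
        · exact Or.inr (by rwa [show i = k + 1 by omega] at hi)

lemma le_triangleUnion {n : ℕ} (B : (Δ[n] : SSet.{u}).Subcomplex) (k : ℕ) :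
    B ≤ triangleUnion n B k :=
  fun _ α h => (mem_triangleUnion_iff B k α).2 (Or.inl h)

lemma triangleSub_le_spcSub {n i : ℕ} (hi₁ : 1 ≤ i) (hin : i + 1 ≤ n) :
    triangleSub n i ≤ spcSub n :=
  fun _ _ h => ⟨i, hi₁, hin, h⟩

lemma triangleUnion_eq_spcSub {n : ℕ} {B : (Δ[n] : SSet.{u}).Subcomplex} (hB : B ≤ spcSub n) :
    triangleUnion n B (n - 1) = spcSub n := by
  refine le_antisymm (fun m α h => ?_) (fun m α ⟨i, hi₁, hin, h⟩ =>
    (mem_triangleUnion_iff B _ α).2 (Or.inr ⟨i, hi₁, by omega, h⟩))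
  rcases (mem_triangleUnion_iff B _ α).1 h with hα | ⟨i, hi₁, hin, hα⟩
  · exact hB m hα
  · exact triangleSub_le_spcSub hi₁ (by omega) m hα

lemma coneSub_le_spcSub {n : ℕ} (hn : 2 ≤ n) : coneSub n ≤ spcSub n := by
  rintro m α ⟨c, hc₁, hcn, h⟩
  by_cases hc : c + 1 ≤ n
  · exact ⟨c, hc₁, hc, fun j => by have := h j; omega⟩
  · exact ⟨n - 1, by omega, by omega, fun j => by have := h j; omega⟩

lemma spineSub_le_spcSub {n : ℕ} (hn : 2 ≤ n) : spineSub n ≤ spcSub n := by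
  rintro m α ⟨s, hs, h⟩
  rcases Nat.eq_zero_or_pos s with rfl | hs₀
  · exact ⟨1, by omega, by omega, fun j => by have := h j; omega⟩
  · exact ⟨s, hs₀, hs, fun j => by have := h j; omega⟩

/-- The `2`-simplex `{0, k + 1, k + 2}` of `Δ[n]`. -/
def triangle (n k : ℕ) (hk : k + 2 ≤ n) : Δ[2] ⟶ Δ[n] :=
  SSet.stdSimplex.map <| SimplexCategory.mkHom
    { toFun j := ⟨if (j : ℕ) = 0 then 0 else k + j, by split <;> omega⟩
      monotone' a b (hab : (a : ℕ) ≤ b) := by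
        change (ite _ _ _ : ℕ) ≤ ite _ _ _
        split <;> split <;> omega }

lemma triangle_app_val (n k : ℕ) (hk : k + 2 ≤ n) {m : SimplexCategoryᵒᵖ}
    (β : (Δ[2] : SSet.{u}).obj m) (j : Fin (m.unop.len + 1)) :
    (stdSimplex.asOrderHom ((triangle n k hk).app m β) j : ℕ) =
      if (stdSimplex.asOrderHom β j : ℕ) = 0 then 0 else k + stdSimplex.asOrderHom β j :=
  rfl

instance (n k : ℕ) (hk : k + 2 ≤ n) : Mono (triangle.{u} n k hk) := by
  refine @SSet.stdSimplex.mono_map _ _ _ (SimplexCategory.mono_iff_injective.2 fun a b hab => ?_)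
  have h : (ite _ _ _ : ℕ) = ite _ _ _ := congrArg Fin.val hab
  apply Fin.ext
  split at h <;> split at h <;> omega

lemma range_triangle (n k : ℕ) (hk : k + 2 ≤ n) :
    Subcomplex.range (triangle.{u} n k hk) = triangleSub n (k + 1) := by
  apply le_antisymm
  · rintro m _ ⟨β, rfl⟩ j
    have := (stdSimplex.asOrderHom β j).is_lt
    rw [triangle_app_val]
    split <;> omega
  · intro m α hα
    let v (j : Fin (m.unop.len + 1)) : ℕ :=
      if (stdSimplex.asOrderHom α j : ℕ) = 0 then 0
      else if (stdSimplex.asOrderHom α j : ℕ) = k + 1 then 1 else 2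
    have hv_lt (j) : v j < 3 := by
      simp only [v]
      split_ifs <;> omega
    have hv_mono (a b) (hab : a ≤ b) : v a ≤ v b := by
      have := Fin.le_def.1 ((stdSimplex.asOrderHom α).monotone hab)
      have := hα a
      have := hα b
      simp only [v]
      split_ifs <;> omega
    refine ⟨stdSimplex.objMk (n := ⦋2⦌) ⟨fun j => ⟨v j, hv_lt j⟩, hv_mono⟩, ?_⟩
    refine SSet.stdSimplex.ext_asOrderHom fun j => ?_
    have hj : (stdSimplex.asOrderHom α j : ℕ) = 0 ∨ _ = k + 1 ∨ _ = k + 1 + 1 := hα j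
    rw [triangle_app_val]
    change (if v j = 0 then 0 else k + v j) = _
    simp only [v]
    grind

lemma le_one_of_triangle_app_mem_triangleSub {n k i : ℕ} (hk : k + 2 ≤ n) (hik : i ≤ k)
    {m : SimplexCategoryᵒᵖ} {β : (Δ[2] : SSet.{u}).obj m}
    (h : (triangle n k hk).app m β ∈ (triangleSub n i).obj m) (j : Fin (m.unop.len + 1)) :
    (stdSimplex.asOrderHom β j : ℕ) ≤ 1 := by
  have := h j
  rw [triangle_app_val] at this
  split at this <;> omega

lemma preimage_triangleUnion_coneSub (n k : ℕ) (hk : k + 2 ≤ n) :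
    (triangleUnion n (coneSub n) k).preimage (triangle.{u} n k hk) = coneSub 2 := by
  ext m β
  show (triangle n k hk).app m β ∈ (triangleUnion n (coneSub n) k).obj m ↔
    β ∈ (coneSub 2).obj m
  rw [mem_triangleUnion_iff]
  constructor
  · rintro (⟨c, hc₁, hcn, h⟩ | ⟨i, -, hik, h⟩)
    · refine ⟨max 1 (min (c - k) 2), by omega, by omega, fun j => ?_⟩
      have := h j
      rw [triangle_app_val] at this
      split at this <;> omega
    · exact ⟨1, le_rfl, by omega, fun j => by
        have := le_one_of_triangle_app_mem_triangleSub hk hik h j; omega⟩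
  · rintro ⟨c, hc₁, hc₂, h⟩
    refine Or.inl ⟨k + c, by omega, by omega, fun j => ?_⟩
    have := h j
    rw [triangle_app_val]
    split <;> omega

lemma preimage_triangleUnion_spineSub (n k : ℕ) (hk : k + 2 ≤ n) :
    (triangleUnion n (spineSub n) k).preimage (triangle.{u} n k hk) = spineSub 2 := by
  ext m β
  show (triangle n k hk).app m β ∈ (triangleUnion n (spineSub n) k).obj m ↔
    β ∈ (spineSub 2).obj m
  rw [mem_triangleUnion_iff]
  constructor
  · rintro (⟨s, hs, h⟩ | ⟨i, -, hik, h⟩)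
    · refine ⟨min s 1, by omega, fun j => ?_⟩
      have := h j
      have := (stdSimplex.asOrderHom β j).is_lt
      rw [triangle_app_val] at *
      split at * <;> omega
    · exact ⟨0, by omega, fun j => by
        have := le_one_of_triangle_app_mem_triangleSub hk hik h j; omega⟩
  · rintro ⟨s, hs, h⟩
    have hτ (j) := triangle_app_val n k hk β j
    rcases Nat.eq_zero_or_pos k with rfl | hk₀
    · exact Or.inl ⟨s, by omega, fun j => by
        have := h j; have := hτ j; split at this <;> omega⟩
    · rcases Nat.eq_zero_or_pos s with rfl | hs₀
      · exact Or.inr ⟨k, hk₀, le_rfl, fun j => by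
          have := h j; have := hτ j; split at this <;> omega⟩
      · exact Or.inl ⟨k + 1, by omega, fun j => by
          have := h j; have := hτ j; split at this <;> omega⟩

namespace IsSaturated

variable {A : MorphismProperty SSet.{0}}

lemma comp_mem (hA : IsSaturated A) {X Y Z : SSet.{0}} {f : X ⟶ Y} {g : Y ⟶ Z}
    (hf : A f) (hg : A g) : A (f ≫ g) := by
  have hterm : IsTerminal (⊤ : Fin 3) := isTerminalTop
  refine hA.transfinite (Fin 3) inferInstance inferInstance inferInstance
    Finite.to_wellFoundedLT (ComposableArrows.mk₂ f g) (coconeOfDiagramTerminal hterm _)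
    (colimitOfDiagramTerminal hterm _) (fun j hj => ?_) (fun j hj => ?_)
  · fin_cases j
    · exact hf
    · exact hg
    · exact absurd (fun b _ => Fin.le_last b : IsMax _) hj
  · exfalso
    fin_cases j
    · exact hj.ne_bot rfl
    · exact hj.isSuccPrelimit 0 (by constructor <;> decide)
    · exact hj.isSuccPrelimit 1 (by constructor <;> decide)

lemma homOfLE_sup_mem_of_range_eq (hA : IsSaturated A) {X Y : SSet.{0}} {B T : X.Subcomplex}
    (f : Y ⟶ X) [Mono f] (hfT : Subcomplex.range f = T) (hf : A (B.preimage f).ι) :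
    A (Subcomplex.homOfLE (le_sup_left : B ≤ B ⊔ T)) := by
  subst hfT
  exact hA.pushout _ _ _ _ (B.isPushout_preimage_sup_range f) hf

lemma homOfLE_triangleUnion_succ_mem (hA : IsSaturated A) {n k : ℕ} (hk : k + 2 ≤ n)
    {B : (Δ[n] : SSet.{0}).Subcomplex} {S : (Δ[2] : SSet.{0}).Subcomplex} (hS : A S.ι)
    (hpre : (triangleUnion n B k).preimage (triangle n k hk) = S) :
    A (Subcomplex.homOfLE (le_sup_left : triangleUnion n B k ≤ triangleUnion n B (k + 1))) :=
  hA.homOfLE_sup_mem_of_range_eq (triangle n k hk) (range_triangle n k hk) (by rwa [hpre])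

lemma homOfLE_triangleUnion_mem (hA : IsSaturated A) {n : ℕ}
    {B : (Δ[n] : SSet.{0}).Subcomplex} {S : (Δ[2] : SSet.{0}).Subcomplex} (hS : A S.ι)
    (hpre : ∀ k (hk : k + 2 ≤ n), (triangleUnion n B k).preimage (triangle n k hk) = S)
    {k : ℕ} (hk₁ : 1 ≤ k) (hkn : k + 1 ≤ n) :
    A (Subcomplex.homOfLE (le_triangleUnion B k)) := by
  induction k, hk₁ using Nat.le_induction with
  | base => exact hA.homOfLE_triangleUnion_succ_mem hkn hS (hpre 0 hkn)
  | succ k hk ih =>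
    exact hA.comp_mem (ih (by omega)) (hA.homOfLE_triangleUnion_succ_mem hkn hS (hpre k hkn))

lemma homOfLE_spcSub_mem (hA : IsSaturated A) {n : ℕ} (hn : 2 ≤ n)
    {B : (Δ[n] : SSet.{0}).Subcomplex} (hB : B ≤ spcSub n) {S : (Δ[2] : SSet.{0}).Subcomplex}
    (hS : A S.ι)
    (hpre : ∀ k (hk : k + 2 ≤ n), (triangleUnion n B k).preimage (triangle n k hk) = S) :
    A (Subcomplex.homOfLE hB) := by
  have h := hA.homOfLE_triangleUnion_mem hS hpre (k := n - 1) (by omega) (by omega)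
  convert h using 2 <;> exact (triangleUnion_eq_spcSub hB).symm

end IsSaturated

/-- Let `A` be a saturated class of morphisms of simplicial sets satisfying
3-for-2 for monomorphisms. If `A` contains all spine inclusions `sp_n : Sp_n → Δ[n]`, `n ≥ 2`,
and contains the left cone inclusion `c₂ : C₂ → Δ[2]`, then `A` contains all left cone
inclusions `c_n : C_n → Δ[n]`, `n ≥ 2`. -/
theorem spines_and_c2_to_cones (A : MorphismProperty SSet.{0})
    (hA : IsSaturated A) (h32 : ThreeForTwo A)
    (hsp : ∀ n : ℕ, 2 ≤ n → A ((spineSub n).ι)) (hc2 : A ((coneSub 2).ι)) :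
    ∀ n : ℕ, 2 ≤ n → A ((coneSub n).ι) := by
  intro n hn
  have hcone := hA.homOfLE_spcSub_mem hn (coneSub_le_spcSub hn) hc2
    (preimage_triangleUnion_coneSub n)
  have hspine := hA.homOfLE_spcSub_mem hn (spineSub_le_spcSub hn) (hsp 2 le_rfl)
    (preimage_triangleUnion_spineSub n)
  have hspc : A (spcSub n).ι := h32.1 _ _ inferInstance inferInstance (hsp n hn) hspine
  exact hA.comp_mem hcone hspc

end BousfieldPaper
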